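/- arXiv:1106.6127 — 6 statements merged into one kernel-verified Lean document; each statement's English description precedes it below -/
import Mathlib

section
/- If (A, H, D) is a σ-spectral triple and h = h* is a selfadjoint element of A, then the perturbed triple (A, H, D') with D' = e^h D e^h is a σ'-spectral triple, where σ'(a) = e^h σ(e^h a e^{-h}) e^{-h}; concretely, the twisted commutator satisfies D'a − σ'(a)D' = e^h (D e^h a e^{-h} − σ(e^h a e^{-h}) D) e^h, hence is bounded whenever all σ-twisted commutators [D,b]_σ are bounded. -/
/-- **Perturbation of a twisted spectral triple.**
Work in a unital associative algebra `R` of operators; `B` is the subring of *bounded*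
operators, `σ` is an automorphism, `D ∈ R` is the "Dirac operator", and `u = e^h`,
`v = e^{-h}` are mutually inverse bounded elements coming from a selfadjoint `h = h* ∈ A ⊆ B`.
Assume all `σ`-twisted commutators `[D,b]_σ = D b - σ(b) D` of bounded elements are bounded.
Then, with `D' = u D u` and `σ'(a) = u σ(u a v) v`:
* `σ'` is a bijective multiplicative (hence ring) automorphism, and
* the twisted commutator satisfies
  `D' a - σ'(a) D' = u (D (u a v) - σ(u a v) D) u`, hence is bounded for every bounded `a`;
i.e. `(A, H, D')` is a `σ'`-spectral triple. -/
theorem perturbed_twisted_spectral_triple {R : Type*} [Ring R]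
    (B : Subring R) (σ : R ≃+* R) (D u v : R)
    (huv : u * v = 1) (hvu : v * u = 1)
    (hu : u ∈ B) (hv : v ∈ B)
    (hσB : ∀ b ∈ B, σ b ∈ B)
    (hbound : ∀ b ∈ B, D * b - σ b * D ∈ B) :
    Function.Bijective (fun a : R => u * σ (u * a * v) * v)
    ∧ (∀ a b : R, u * σ (u * (a * b) * v) * v
        = (u * σ (u * a * v) * v) * (u * σ (u * b * v) * v))
    ∧ (∀ a ∈ B,
        (u * D * u) * a - (u * σ (u * a * v) * v) * (u * D * u)
          = u * (D * (u * a * v) - σ (u * a * v) * D) * u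
        ∧ (u * D * u) * a - (u * σ (u * a * v) * v) * (u * D * u) ∈ B) := by
  refine ⟨?_, ?_, ?_⟩
  · refine Function.bijective_iff_has_inverse.2
      ⟨fun a => v * σ.symm (v * a * u) * u, fun a => ?_, fun a => ?_⟩ <;> simp only []
    · rw [show v * (u * σ (u * a * v) * v) * u = σ (u * a * v) by
        rw [← mul_assoc, ← mul_assoc, hvu, one_mul, mul_assoc, hvu, mul_one],
        RingEquiv.symm_apply_apply, ← mul_assoc, ← mul_assoc, hvu, one_mul,
        mul_assoc, hvu, mul_one]
    · rw [show u * (v * σ.symm (v * a * u) * u) * v = σ.symm (v * a * u) by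
        rw [← mul_assoc, ← mul_assoc, huv, one_mul, mul_assoc, huv, mul_one],
        RingEquiv.apply_symm_apply, ← mul_assoc, ← mul_assoc, huv, one_mul,
        mul_assoc, huv, mul_one]
  · intro a b
    have h0 : u * (a * b) * v = (u * a * v) * (u * b * v) := by
      rw [show (u*a*v)*(u*b*v) = u*a*((v*u)*(b*v)) from by noncomm_ring, hvu]
      noncomm_ring
    rw [h0, map_mul]
    rw [show (u*σ (u*a*v)*v)*(u*σ (u*b*v)*v)
        = u*σ (u*a*v)*((v*u)*(σ (u*b*v)*v)) from by noncomm_ring, hvu]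
    noncomm_ring
  · intro a ha
    have key : (u * D * u) * a - (u * σ (u * a * v) * v) * (u * D * u)
        = u * (D * (u * a * v) - σ (u * a * v) * D) * u := by
      have h1 : (u * D * u) * a = u * (D * (u * a * v)) * u := by
        rw [show u*(D*(u*a*v))*u = u*D*(u*a)*((v*u)) from by noncomm_ring, hvu]
        noncomm_ring
      have h2 : (u * σ (u * a * v) * v) * (u * D * u)
          = u * (σ (u * a * v) * D) * u := by
        rw [show (u*σ (u*a*v)*v)*(u*D*u) = u*σ (u*a*v)*((v*u)*(D*u)) from by noncomm_ring, hvu]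
        noncomm_ring
      rw [h1, h2, mul_sub, sub_mul]
    have hm : u * a * v ∈ B := B.mul_mem (B.mul_mem hu ha) hv
    exact ⟨key, key ▸ B.mul_mem (B.mul_mem hu (hbound _ hm)) hu⟩
end

section
/- Let A be an algebra with a right Γ-action by automorphisms, j : Γ → Z(A) ∩ A^* a 1-cocycle, and δ : A → A a derivation satisfying δ(a·γ) = (δ(a)·γ) jγ for all a ∈ A, γ ∈ Γ. Then for each positive integer s, the map δ'_s on A ⋊ Γ defined by δ'_s(a ⊗ γ) = ( δ((a·γ^{-1})(jγ^{-1})^s)(jγ^{-1})^{-s} ⊗ 1 )(1 ⊗ γ) is a σ-derivation, where σ(a ⊗ γ) = ((jγ^{-1})·γ) a ⊗ γ; i.e. δ'_s(xy) = δ'_s(x)y + σ(x)δ'_s(y) for all x, y ∈ A ⋊ Γ. -/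
/-- Crossed-product multiplication on pure tensors: `(a ⊗ γ)(b ⊗ μ) = (a·μ) b ⊗ γμ`. -/
def cpMul {A : Type*} [Ring A] {Γ : Type*} [Group Γ]
    (act : A → Γ → A) (p q : A × Γ) : A × Γ :=
  (act p.1 q.2 * q.1, p.2 * q.2)

/-- The automorphism `σ(a ⊗ γ) = ((jγ⁻¹)·γ) a ⊗ γ` on pure tensors. -/
def cpSigma {A : Type*} [Ring A] {Γ : Type*} [Group Γ]
    (act : A → Γ → A) (j : Γ → A) (p : A × Γ) : A × Γ :=
  (act (j p.2⁻¹) p.2 * p.1, p.2)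

/-- The twisted derivation
`δ'_s(a ⊗ γ) = ( δ((a·γ⁻¹)(jγ⁻¹)^s)(jγ⁻¹)^{-s} ⊗ 1 )(1 ⊗ γ)` on pure tensors; here
`jinv γ = (j γ)⁻¹`, so `(jγ⁻¹)^{-s} = (jinv γ⁻¹)^s`. -/
def cpDelta {A : Type*} [Ring A] {Γ : Type*} [Group Γ]
    (act : A → Γ → A) (δ : A → A) (j jinv : Γ → A) (s : ℕ) (p : A × Γ) : A × Γ :=
  (act (δ (act p.1 p.2⁻¹ * (j p.2⁻¹) ^ s) * (jinv p.2⁻¹) ^ s) p.2, p.2)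


/-- Move a central element out of a product. -/
lemma cp_cl {A : Type*} [Ring A] {c : A} (hc : ∀ t, c * t = t * c) (x y : A) :
    x * (c * y) = c * (x * y) := by
  rw [← mul_assoc, ← hc, mul_assoc]

/-- Rearrangement lemma 1. -/
lemma cp_r1 {A : Type*} [Ring A] {c : A} (hc : ∀ t, c * t = t * c) (x y z : A) :
    x * y * (z * c) = x * c * (y * z) := by
  simp only [mul_assoc]
  rw [← hc z, cp_cl hc y z]

/-- Rearrangement lemma 2. -/
lemma cp_r2 {A : Type*} [Ring A] {c cs ci : A}
    (hc : ∀ t, c * t = t * c) (hcs : ∀ t, cs * t = t * cs) (hci : ∀ t, ci * t = t * ci)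
    (hcan : cs * ci = 1) (x y z : A) :
    x * cs * (y * c) * (z * ci) = c * (x * (y * z)) := by
  simp only [mul_assoc]
  rw [← hci z, cp_cl hci c z, cp_cl hci y (c * z),
    ← mul_assoc cs ci (y * (c * z)), hcan, one_mul,
    cp_cl hc y z, cp_cl hc x (y * z)]

/-- **Twisted derivations on crossed products.**
Let `A` carry a right `Γ`-action by algebra automorphisms, `j : Γ → Z(A) ∩ A^*` a
1-cocycle (with pointwise inverse `jinv`), and `δ : A → A` a derivation with
`δ(a·γ) = (δ(a)·γ) jγ`.  Then for each positive integer `s` the map `δ'_s` is a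
`σ`-derivation of `A ⋊ Γ`:  `δ'_s(xy) = δ'_s(x) y + σ(x) δ'_s(y)` (on pure tensors,
both summands having the same group component, so that the sum is again a pure tensor). -/
theorem crossed_product_twisted_derivation
    {A : Type*} [Ring A] {Γ : Type*} [Group Γ]
    (act : A → Γ → A)
    (hact_one : ∀ a, act a 1 = a)
    (hact_mul : ∀ a γ μ, act (act a γ) μ = act a (γ * μ))
    (hact_ringmul : ∀ γ a b, act (a * b) γ = act a γ * act b γ)
    (hact_add : ∀ γ a b, act (a + b) γ = act a γ + act b γ)
    (j jinv : Γ → A)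
    (hj_center : ∀ γ x, j γ * x = x * j γ)
    (hj_inv : ∀ γ, j γ * jinv γ = 1 ∧ jinv γ * j γ = 1)
    (hcocycle : ∀ γ μ, j (γ * μ) = act (j γ) μ * j μ)
    (δ : A → A)
    (hδ_add : ∀ a b, δ (a + b) = δ a + δ b)
    (hδ_leibniz : ∀ a b, δ (a * b) = δ a * b + a * δ b)
    (hδ_compat : ∀ a γ, δ (act a γ) = act (δ a) γ * j γ)
    (s : ℕ) (hs : 0 < s) :
    ∀ p q : A × Γ,
      cpDelta act δ j jinv s (cpMul act p q)
        = ((cpMul act (cpDelta act δ j jinv s p) q).1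
            + (cpMul act (cpSigma act j p) (cpDelta act δ j jinv s q)).1,
           p.2 * q.2) := by
  -- basic consequences of the axioms
  have act1 : ∀ γ : Γ, act 1 γ = 1 := by
    intro γ
    have hx : ∀ x : A, act (act x γ⁻¹) γ = x := by
      intro x; rw [hact_mul, inv_mul_cancel, hact_one]
    have h : act 1 γ * 1 = 1 := by
      calc act 1 γ * 1 = act 1 γ * act (act 1 γ⁻¹) γ := by rw [hx]
        _ = act (1 * act 1 γ⁻¹) γ := (hact_ringmul _ _ _).symm
        _ = 1 := by rw [one_mul, hx]
    simpa using h
  have actpow : ∀ (c : A) (γ : Γ) (n : ℕ), act (c ^ n) γ = act c γ ^ n := by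
    intro c γ n
    induction n with
    | zero => simpa using act1 γ
    | succ n ih => rw [pow_succ, hact_ringmul, ih, pow_succ]
  have jinv_center : ∀ (γ : Γ) (x : A), jinv γ * x = x * jinv γ := by
    intro γ x
    calc jinv γ * x = jinv γ * (x * (j γ * jinv γ)) := by rw [(hj_inv γ).1, mul_one]
      _ = jinv γ * (x * j γ * jinv γ) := by rw [mul_assoc x]
      _ = jinv γ * (j γ * x * jinv γ) := by rw [← hj_center]
      _ = jinv γ * j γ * (x * jinv γ) := by simp only [mul_assoc]
      _ = x * jinv γ := by rw [(hj_inv γ).2, one_mul]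
  have cen_pow : ∀ (c : A), (∀ x, c * x = x * c) → ∀ (n : ℕ) (x : A),
      c ^ n * x = x * c ^ n := by
    intro c hc n x
    induction n with
    | zero => simp
    | succ n ih =>
      rw [pow_succ, mul_assoc, hc x, ← mul_assoc, ih, mul_assoc]
  have powinv : ∀ (γ : Γ) (n : ℕ), j γ ^ n * jinv γ ^ n = 1 := by
    intro γ n
    have hc : Commute (j γ) (jinv γ) := hj_center γ (jinv γ)
    rw [← Commute.mul_pow hc, (hj_inv γ).1, one_pow]
  have jinv_cocycle : ∀ γ μ : Γ, jinv (γ * μ) = act (jinv γ) μ * jinv μ := by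
    intro γ μ
    have hcd : j (γ * μ) * (act (jinv γ) μ * jinv μ) = 1 := by
      rw [hcocycle]
      calc act (j γ) μ * j μ * (act (jinv γ) μ * jinv μ)
          = act (j γ) μ * (act (jinv γ) μ * (j μ * jinv μ)) := by
            simp only [mul_assoc]
            rw [cp_cl (hj_center μ) (act (jinv γ) μ) (jinv μ)]
        _ = 1 := by
            rw [(hj_inv μ).1, mul_one, ← hact_ringmul, (hj_inv γ).1, act1]
    calc jinv (γ * μ)
        = jinv (γ * μ) * (j (γ * μ) * (act (jinv γ) μ * jinv μ)) := by
          rw [hcd, mul_one]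
      _ = jinv (γ * μ) * j (γ * μ) * (act (jinv γ) μ * jinv μ) := by rw [mul_assoc]
      _ = act (jinv γ) μ * jinv μ := by rw [(hj_inv (γ * μ)).2, one_mul]
  intro p q
  obtain ⟨a, γ⟩ := p
  obtain ⟨b, μ⟩ := q
  simp only [cpDelta, cpMul, cpSigma, mul_inv_rev]
  simp only [Prod.mk.injEq, and_true]

  -- centrality facts at γ⁻¹
  have cenP : ∀ x, j γ⁻¹ * x = x * j γ⁻¹ := hj_center γ⁻¹
  have cenPs : ∀ x, j γ⁻¹ ^ s * x = x * j γ⁻¹ ^ s := cen_pow _ (hj_center γ⁻¹) s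
  have cenPis : ∀ x, jinv γ⁻¹ ^ s * x = x * jinv γ⁻¹ ^ s :=
    cen_pow _ (jinv_center γ⁻¹) s
  -- cocycle expansions of the `j`-powers at `μ⁻¹ * γ⁻¹`
  have hQs : j (μ⁻¹ * γ⁻¹) ^ s = act (j μ⁻¹ ^ s) γ⁻¹ * j γ⁻¹ ^ s := by
    have hc : Commute (act (j μ⁻¹) γ⁻¹) (j γ⁻¹) := (hj_center γ⁻¹ _).symm
    rw [hcocycle μ⁻¹ γ⁻¹, Commute.mul_pow hc, actpow]
  have hWs : jinv (μ⁻¹ * γ⁻¹) ^ s = act (jinv μ⁻¹ ^ s) γ⁻¹ * jinv γ⁻¹ ^ s := by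
    have hc : Commute (act (jinv μ⁻¹) γ⁻¹) (jinv γ⁻¹) := (jinv_center γ⁻¹ _).symm
    rw [jinv_cocycle μ⁻¹ γ⁻¹, Commute.mul_pow hc, actpow]
  -- the argument of δ factors
  have hX : act (act a μ * b) (μ⁻¹ * γ⁻¹) * j (μ⁻¹ * γ⁻¹) ^ s
      = act a γ⁻¹ * j γ⁻¹ ^ s * act (act b μ⁻¹ * j μ⁻¹ ^ s) γ⁻¹ := by
    rw [hQs, hact_ringmul (μ⁻¹ * γ⁻¹) (act a μ) b, hact_mul a μ,
      mul_inv_cancel_left, ← hact_mul b μ⁻¹ γ⁻¹,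
      hact_ringmul γ⁻¹ (act b μ⁻¹) (j μ⁻¹ ^ s)]
    exact cp_r1 cenPs _ _ _
  have hδX : δ (act (act a μ * b) (μ⁻¹ * γ⁻¹) * j (μ⁻¹ * γ⁻¹) ^ s)
      = δ (act a γ⁻¹ * j γ⁻¹ ^ s) * act (act b μ⁻¹ * j μ⁻¹ ^ s) γ⁻¹
        + act a γ⁻¹ * j γ⁻¹ ^ s
            * (act (δ (act b μ⁻¹ * j μ⁻¹ ^ s)) γ⁻¹ * j γ⁻¹) := by
    rw [hX, hδ_leibniz, hδ_compat]
  rw [hδX, hWs, add_mul, hact_add]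
  congr 1
  · -- first summand
    rw [cp_r1 cenPis (δ (act a γ⁻¹ * j γ⁻¹ ^ s))
        (act (act b μ⁻¹ * j μ⁻¹ ^ s) γ⁻¹) (act (jinv μ⁻¹ ^ s) γ⁻¹),
      ← hact_ringmul γ⁻¹ (act b μ⁻¹ * j μ⁻¹ ^ s) (jinv μ⁻¹ ^ s),
      mul_assoc (act b μ⁻¹), powinv μ⁻¹ s, mul_one]
    simp [hact_ringmul, hact_mul, hact_one, mul_assoc]
  · -- second summand
    rw [cp_r2 cenP cenPs cenPis (powinv γ⁻¹ s) (act a γ⁻¹)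
        (act (δ (act b μ⁻¹ * j μ⁻¹ ^ s)) γ⁻¹) (act (jinv μ⁻¹ ^ s) γ⁻¹),
      ← hact_ringmul γ⁻¹ (δ (act b μ⁻¹ * j μ⁻¹ ^ s)) (jinv μ⁻¹ ^ s)]
    simp [hact_ringmul, hact_mul, hact_one, mul_assoc]
end

section
/- With the hypotheses above, if in addition δ ∘ j = 0 (i.e. δ(jγ) = 0 for all γ ∈ Γ), then the σ-derivation δ'_s commutes with the automorphism σ: δ'_s ∘ σ = σ ∘ δ'_s on A ⋊ Γ. -/
/-- **`δ'_s` commutes with `σ` when `δ ∘ j = 0`.**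
With the hypotheses of the twisted-derivation proposition, if in addition `δ(jγ) = 0`
for all `γ ∈ Γ`, then `δ'_s ∘ σ = σ ∘ δ'_s` on `A ⋊ Γ`. -/
theorem crossed_product_delta_sigma_commute
    {A : Type*} [Ring A] {Γ : Type*} [Group Γ]
    (act : A → Γ → A)
    (hact_one : ∀ a, act a 1 = a)
    (hact_mul : ∀ a γ μ, act (act a γ) μ = act a (γ * μ))
    (hact_ringmul : ∀ γ a b, act (a * b) γ = act a γ * act b γ)
    (hact_add : ∀ γ a b, act (a + b) γ = act a γ + act b γ)
    (j jinv : Γ → A)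
    (hj_center : ∀ γ x, j γ * x = x * j γ)
    (hj_inv : ∀ γ, j γ * jinv γ = 1 ∧ jinv γ * j γ = 1)
    (hcocycle : ∀ γ μ, j (γ * μ) = act (j γ) μ * j μ)
    (δ : A → A)
    (hδ_add : ∀ a b, δ (a + b) = δ a + δ b)
    (hδ_leibniz : ∀ a b, δ (a * b) = δ a * b + a * δ b)
    (hδ_compat : ∀ a γ, δ (act a γ) = act (δ a) γ * j γ)
    (s : ℕ) (hs : 0 < s)
    (hδj : ∀ γ, δ (j γ) = 0) :
    ∀ p : A × Γ,
      cpDelta act δ j jinv s (cpSigma act j p)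
        = cpSigma act j (cpDelta act δ j jinv s p) := by
  rintro ⟨a, γ⟩
  simp only [cpDelta, cpSigma]
  refine Prod.ext ?_ rfl
  have h1 : act (act (j γ⁻¹) γ * a) γ⁻¹ = j γ⁻¹ * act a γ⁻¹ := by
    rw [hact_ringmul, hact_mul, mul_inv_cancel, hact_one]
  show act (δ (act (act (j γ⁻¹) γ * a) γ⁻¹ * j γ⁻¹ ^ s) * jinv γ⁻¹ ^ s) γ
      = act (j γ⁻¹) γ * act (δ (act a γ⁻¹ * j γ⁻¹ ^ s) * jinv γ⁻¹ ^ s) γ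
  rw [h1, mul_assoc, hδ_leibniz, hδj, zero_mul, zero_add, mul_assoc, hact_ringmul]
end

section
/- Let τ : A → ℂ be a trace on A having the change of variable property τ((a·γ) jγ) = τ(a) for all a ∈ A, γ ∈ Γ, with respect to a 1-cocycle j : Γ → Z(A) ∩ A^*. Then the linear functional τ' on A ⋊ Γ defined by τ'(a ⊗ γ) = 0 for γ ≠ 1 and τ'(a ⊗ 1) = τ(a) is a σ-trace: τ'(xy) = τ'(σ(y)x) for all x, y ∈ A ⋊ Γ, where σ(a ⊗ γ) = ((jγ^{-1})·γ) a ⊗ γ. -/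
/-- The induced functional `τ'(a ⊗ γ) = τ(a)` if `γ = 1` and `0` otherwise. -/
noncomputable def cpTau {A : Type*} [Ring A] {Γ : Type*} [Group Γ]
    (τ : A → ℂ) (p : A × Γ) : ℂ :=
  open scoped Classical in if p.2 = 1 then τ p.1 else 0

/-!
Both `τ'(xy)` and `τ'(σ(y)x)` vanish unless the degrees of `x = a ⊗ γ` and `y = b ⊗ μ` are
inverse to each other, and `γμ = 1 ↔ μγ = 1`. When `γ = μ⁻¹`, the trace property turns
`τ((a·μ) b)` into `τ(b (a·μ))`; acting by `μ⁻¹` and applying the change of variable property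
for `μ⁻¹` gives `τ(((b·μ⁻¹) a) j(μ⁻¹))`, and moving the central `j(μ⁻¹)` to the front is exactly
the twist `(j(μ⁻¹)·μ)·μ⁻¹ = j(μ⁻¹)` contributed by `σ`.
-/

theorem cpTau_mk_one {A : Type*} [Ring A] {Γ : Type*} [Group Γ] (τ : A → ℂ) (a : A) :
    cpTau τ (a, (1 : Γ)) = τ a :=
  if_pos rfl

theorem cpTau_mk_of_ne_one {A : Type*} [Ring A] {Γ : Type*} [Group Γ] (τ : A → ℂ) (a : A)
    {γ : Γ} (hγ : γ ≠ 1) : cpTau τ (a, γ) = 0 :=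
  if_neg hγ

theorem act_act_inv {A Γ : Type*} [Group Γ] (act : A → Γ → A)
    (hact_one : ∀ a, act a 1 = a) (hact_mul : ∀ a γ μ, act (act a γ) μ = act a (γ * μ))
    (a : A) (γ : Γ) : act (act a γ) γ⁻¹ = a := by
  rw [hact_mul, mul_inv_cancel, hact_one]

theorem trace_act_mul_eq_trace_twisted {A : Type*} [Ring A] {Γ : Type*} [Group Γ]
    (act : A → Γ → A) (hact_one : ∀ a, act a 1 = a)
    (hact_mul : ∀ a γ μ, act (act a γ) μ = act a (γ * μ))
    (hact_ringmul : ∀ γ a b, act (a * b) γ = act a γ * act b γ)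
    (j : Γ → A) (hj_center : ∀ γ x, j γ * x = x * j γ)
    (τ : A → ℂ) (hτ_trace : ∀ a b, τ (a * b) = τ (b * a))
    (hτ_change : ∀ a γ, τ (act a γ * j γ) = τ a) (a b : A) (μ : Γ) :
    τ (act a μ * b) = τ (act (act (j μ⁻¹) μ * b) μ⁻¹ * a) :=
  calc τ (act a μ * b) = τ (b * act a μ) := hτ_trace _ _
    _ = τ (act (b * act a μ) μ⁻¹ * j μ⁻¹) := (hτ_change _ _).symm
    _ = τ (act (act (j μ⁻¹) μ * b) μ⁻¹ * a) := by
      rw [hact_ringmul, hact_ringmul, act_act_inv act hact_one hact_mul,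
        act_act_inv act hact_one hact_mul, mul_assoc (j μ⁻¹), hj_center]

theorem crossed_product_twisted_trace_general
    {A : Type*} [Ring A] {Γ : Type*} [Group Γ]
    (act : A → Γ → A)
    (hact_one : ∀ a, act a 1 = a)
    (hact_mul : ∀ a γ μ, act (act a γ) μ = act a (γ * μ))
    (hact_ringmul : ∀ γ a b, act (a * b) γ = act a γ * act b γ)
    (j : Γ → A)
    (hj_center : ∀ γ x, j γ * x = x * j γ)
    (τ : A → ℂ)
    (hτ_trace : ∀ a b, τ (a * b) = τ (b * a))
    (hτ_change : ∀ a γ, τ (act a γ * j γ) = τ a) :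
    ∀ p q : A × Γ,
      cpTau τ (cpMul act p q) = cpTau τ (cpMul act (cpSigma act j q) p) := by
  rintro ⟨a, γ⟩ ⟨b, μ⟩
  simp only [cpMul, cpSigma]
  by_cases h : γ * μ = 1
  · obtain rfl := eq_inv_of_mul_eq_one_left h
    rw [h, mul_inv_cancel, cpTau_mk_one, cpTau_mk_one]
    exact trace_act_mul_eq_trace_twisted act hact_one hact_mul hact_ringmul j hj_center τ
      hτ_trace hτ_change a b μ
  · rw [cpTau_mk_of_ne_one τ _ h, cpTau_mk_of_ne_one τ _ (mt mul_eq_one_comm.mp h)]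

/-- **Twisted trace on the crossed product.**
Let `τ : A → ℂ` be a trace with the change of variable property `τ((a·γ) jγ) = τ(a)`
with respect to a 1-cocycle `j : Γ → Z(A) ∩ A^*`.  Then `τ'` is a `σ`-trace on `A ⋊ Γ`:
`τ'(xy) = τ'(σ(y)x)` (checked on pure tensors, which span `A ⋊ Γ`). -/
theorem crossed_product_twisted_trace
    {A : Type*} [Ring A] {Γ : Type*} [Group Γ]
    (act : A → Γ → A)
    (hact_one : ∀ a, act a 1 = a)
    (hact_mul : ∀ a γ μ, act (act a γ) μ = act a (γ * μ))
    (hact_ringmul : ∀ γ a b, act (a * b) γ = act a γ * act b γ)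
    (hact_add : ∀ γ a b, act (a + b) γ = act a γ + act b γ)
    (j : Γ → A)
    (hj_center : ∀ γ x, j γ * x = x * j γ)
    (hj_unit : ∀ γ, IsUnit (j γ))
    (hcocycle : ∀ γ μ, j (γ * μ) = act (j γ) μ * j μ)
    (τ : A → ℂ)
    (hτ_add : ∀ a b, τ (a + b) = τ a + τ b)
    (hτ_trace : ∀ a b, τ (a * b) = τ (b * a))
    (hτ_change : ∀ a γ, τ (act a γ * j γ) = τ a) :
    ∀ p q : A × Γ,
      cpTau τ (cpMul act p q) = cpTau τ (cpMul act (cpSigma act j q) p) :=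
  crossed_product_twisted_trace_general act hact_one hact_mul hact_ringmul j hj_center τ hτ_trace
    hτ_change
end

section
/- With τ, δ, j as above, if moreover τ ∘ δ = 0 on A, then the induced functional τ' on A ⋊ Γ vanishes on the image of the twisted derivation δ'_s: τ' ∘ δ'_s = 0. -/
/-- **`τ'` vanishes on the image of `δ'_s`.**
With `A`, `Γ`, the 1-cocycle `j`, the compatible derivation `δ` and the trace `τ` as
before, if moreover `τ ∘ δ = 0` on `A`, then `τ' ∘ δ'_s = 0` on `A ⋊ Γ` (checked on
pure tensors, which span `A ⋊ Γ`). -/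
theorem crossed_product_tau_delta_vanishes
    {A : Type*} [Ring A] {Γ : Type*} [Group Γ]
    (act : A → Γ → A)
    (hact_one : ∀ a, act a 1 = a)
    (hact_mul : ∀ a γ μ, act (act a γ) μ = act a (γ * μ))
    (hact_ringmul : ∀ γ a b, act (a * b) γ = act a γ * act b γ)
    (hact_add : ∀ γ a b, act (a + b) γ = act a γ + act b γ)
    (j jinv : Γ → A)
    (hj_center : ∀ γ x, j γ * x = x * j γ)
    (hj_inv : ∀ γ, j γ * jinv γ = 1 ∧ jinv γ * j γ = 1)
    (hcocycle : ∀ γ μ, j (γ * μ) = act (j γ) μ * j μ)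
    (δ : A → A)
    (hδ_add : ∀ a b, δ (a + b) = δ a + δ b)
    (hδ_leibniz : ∀ a b, δ (a * b) = δ a * b + a * δ b)
    (hδ_compat : ∀ a γ, δ (act a γ) = act (δ a) γ * j γ)
    (τ : A → ℂ)
    (hτ_add : ∀ a b, τ (a + b) = τ a + τ b)
    (hτ_trace : ∀ a b, τ (a * b) = τ (b * a))
    (hτδ : ∀ a, τ (δ a) = 0)
    (s : ℕ) (hs : 0 < s) :
    ∀ p : A × Γ, cpTau τ (cpDelta act δ j jinv s p) = 0 := by
  have hj1 : j 1 = 1 := by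
    have h := hcocycle 1 1
    rw [one_mul, hact_one] at h
    have := congrArg (fun x => x * jinv 1) h
    simp only [mul_assoc, (hj_inv 1).1, mul_one] at this
    exact this.symm
  have hjinv1 : jinv 1 = 1 := by
    have := (hj_inv 1).1
    rwa [hj1, one_mul] at this
  rintro ⟨a, γ⟩
  unfold cpTau cpDelta
  by_cases hγ : γ = 1
  · subst hγ
    simp [inv_one, hj1, hjinv1, one_pow, mul_one, hact_one, hτδ]
  · simp [hγ]
end

section
/- Let (A, H, D) be a spectral triple and G a subgroup of Sim(A, H, D) with scaling character μ. Then σ(aU) := μ(U)^{-1} a U defines an algebra automorphism of the crossed product A ⋊ G, and for each a ∈ A and U ∈ G the twisted commutator satisfies D(aU) − σ(aU)D = [D, a] U; in particular (A ⋊ G, H, D) is a σ-spectral triple whenever [D,a] is bounded for all a ∈ A. -/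
variable {H : Type*} [NormedAddCommGroup H] [InnerProductSpace ℂ H] [CompleteSpace H]

/-- Conjugation `T ↦ U T U*` of a bounded operator by a unitary `U`. -/
noncomputable def unitaryConj (U : H ≃ₗᵢ[ℂ] H) (T : H →L[ℂ] H) : H →L[ℂ] H :=
  (U.toContinuousLinearEquiv : H →L[ℂ] H).comp
    (T.comp (U.symm.toContinuousLinearEquiv : H →L[ℂ] H))

/-- Crossed-product multiplication on pure "aU" pairs:
`(aU)(bV) = (a · U b U*)(U V)`; here `V.trans U` is the composite `U ∘ V`. -/
noncomputable def cpMulG (p q : (H →L[ℂ] H) × (H ≃ₗᵢ[ℂ] H)) :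
    (H →L[ℂ] H) × (H ≃ₗᵢ[ℂ] H) :=
  (p.1 * unitaryConj p.2 q.1, q.2.trans p.2)

/-- The map `σ(aU) = μ(U)⁻¹ aU` on pure pairs. -/
noncomputable def cpSigmaG (μ : (H ≃ₗᵢ[ℂ] H) → ℝ) (p : (H →L[ℂ] H) × (H ≃ₗᵢ[ℂ] H)) :
    (H →L[ℂ] H) × (H ≃ₗᵢ[ℂ] H) :=
  (((μ p.2 : ℂ))⁻¹ • p.1, p.2)

/-- **Twisting a spectral triple by scaling automorphisms (Moscovici).**
Let `(A, H, D)` be a spectral triple, `G` a subgroup of `Sim(A,H,D)` with scaling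
character `μ` (`U D U* = μ(U) D`, `μ(U) > 0`).  Then `σ(aU) := μ(U)⁻¹ aU` defines an
algebra automorphism of `A ⋊ G` (it is multiplicative and bijective on the spanning
pure pairs), and for each `a ∈ A`, `U ∈ G` the twisted commutator satisfies
`D (aU) - σ(aU) D = [D,a] U`; in particular all twisted commutators are bounded
whenever the `[D,a]` are, so `(A ⋊ G, H, D)` is a `σ`-spectral triple. -/
theorem crossed_product_scaling_twisted_triple
    (A : Subalgebra ℂ (H →L[ℂ] H)) (D : H →ₗ[ℂ] H)
    (G : Subgroup (H ≃ₗᵢ[ℂ] H)) (μ : (H ≃ₗᵢ[ℂ] H) → ℝ)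
    (hμpos : ∀ U ∈ G, 0 < μ U)
    (hμhom : ∀ U ∈ G, ∀ V ∈ G, μ (V.trans U) = μ U * μ V)
    (hconj : ∀ U ∈ G, ∀ a ∈ A, unitaryConj U a ∈ A)
    (hscale : ∀ U ∈ G, ∀ x, U (D (U.symm x)) = μ U • D x) :
    -- σ is an automorphism of A ⋊ G:
    (∀ p q : (H →L[ℂ] H) × (H ≃ₗᵢ[ℂ] H), p.2 ∈ G → q.2 ∈ G →
        cpSigmaG μ (cpMulG p q) = cpMulG (cpSigmaG μ p) (cpSigmaG μ q))
    ∧ (∀ p : (H →L[ℂ] H) × (H ≃ₗᵢ[ℂ] H), p.2 ∈ G →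
        cpSigmaG μ ((μ p.2 : ℂ) • p.1, p.2) = p
        ∧ ((μ p.2 : ℂ) • (cpSigmaG μ p).1, (cpSigmaG μ p).2) = p)
    -- the twisted commutator identity `[D, aU]_σ = [D, a] U`:
    ∧ (∀ (a : H →L[ℂ] H), a ∈ A → ∀ U : H ≃ₗᵢ[ℂ] H, U ∈ G →
        D ∘ₗ ((a : H →ₗ[ℂ] H) ∘ₗ ↑U.toLinearEquiv)
            - ((μ U : ℂ))⁻¹ • ((a : H →ₗ[ℂ] H) ∘ₗ ↑U.toLinearEquiv ∘ₗ D)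
          = (D ∘ₗ (a : H →ₗ[ℂ] H) - (a : H →ₗ[ℂ] H) ∘ₗ D) ∘ₗ ↑U.toLinearEquiv)
    -- hence boundedness of [D,a] yields boundedness of the twisted commutators:
    ∧ (∀ (a : H →L[ℂ] H), a ∈ A → ∀ U : H ≃ₗᵢ[ℂ] H, U ∈ G →
        (∃ C : H →L[ℂ] H, (C : H →ₗ[ℂ] H) = D ∘ₗ (a : H →ₗ[ℂ] H) - (a : H →ₗ[ℂ] H) ∘ₗ D) →
        ∃ C' : H →L[ℂ] H, (C' : H →ₗ[ℂ] H)
          = D ∘ₗ ((a : H →ₗ[ℂ] H) ∘ₗ ↑U.toLinearEquiv)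
              - ((μ U : ℂ))⁻¹ • ((a : H →ₗ[ℂ] H) ∘ₗ ↑U.toLinearEquiv ∘ₗ D)) := by
  refine ⟨?_, ?_, ?_, ?_⟩
  · intro p q hp hq
    have hμp : (μ p.2 : ℂ) ≠ 0 := by
      exact_mod_cast (hμpos p.2 hp).ne'
    have hμq : (μ q.2 : ℂ) ≠ 0 := by
      exact_mod_cast (hμpos q.2 hq).ne'
    simp only [cpSigmaG, cpMulG]
    refine Prod.ext ?_ rfl
    simp only [unitaryConj]
    have : ((μ (q.2.trans p.2) : ℝ) : ℂ) = (μ p.2 : ℂ) * (μ q.2 : ℂ) := by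
      rw [hμhom p.2 hp q.2 hq]; push_cast; ring
    rw [this]
    simp only [ContinuousLinearMap.comp_smul, ContinuousLinearMap.smul_comp,
      mul_inv, smul_mul_smul_comm]
    try rw [mul_comm ((μ p.2 : ℂ))⁻¹]
  · intro p hp
    have hμp : (μ p.2 : ℂ) ≠ 0 := by
      exact_mod_cast (hμpos p.2 hp).ne'
    constructor
    · simp only [cpSigmaG]
      exact Prod.ext (inv_smul_smul₀ hμp p.1) rfl
    · simp only [cpSigmaG]
      exact Prod.ext (smul_inv_smul₀ hμp p.1) rfl
  · intro a ha U hU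
    have hμ : (μ U : ℂ) ≠ 0 := by exact_mod_cast (hμpos U hU).ne'
    ext x
    have h1 : U (D x) = (μ U : ℝ) • D (U x) := by
      have := hscale U hU (U x)
      simpa using this
    have h2 : ((μ U : ℂ))⁻¹ • U (D x) = D (U x) := by
      rw [h1, ← algebraMap_smul ℂ (μ U) (D (U x)), Complex.coe_algebraMap,
        inv_smul_smul₀ hμ]
    simp only [LinearMap.sub_apply, LinearMap.comp_apply, LinearMap.smul_apply,
      LinearEquiv.coe_coe, LinearIsometryEquiv.coe_toLinearEquiv]
    rw [← map_smul, h2]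
  · intro a ha U hU ⟨C, hC⟩
    refine ⟨C.comp (U.toContinuousLinearEquiv : H →L[ℂ] H), ?_⟩
    have h3 : D ∘ₗ ((a : H →ₗ[ℂ] H) ∘ₗ ↑U.toLinearEquiv)
            - ((μ U : ℂ))⁻¹ • ((a : H →ₗ[ℂ] H) ∘ₗ ↑U.toLinearEquiv ∘ₗ D)
          = (D ∘ₗ (a : H →ₗ[ℂ] H) - (a : H →ₗ[ℂ] H) ∘ₗ D) ∘ₗ ↑U.toLinearEquiv := by
      have hμ : (μ U : ℂ) ≠ 0 := by exact_mod_cast (hμpos U hU).ne'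
      ext x
      have h1 : U (D x) = (μ U : ℝ) • D (U x) := by simpa using hscale U hU (U x)
      have h2 : ((μ U : ℂ))⁻¹ • U (D x) = D (U x) := by
        rw [h1, ← algebraMap_smul ℂ (μ U) (D (U x)), Complex.coe_algebraMap,
          inv_smul_smul₀ hμ]
      simp only [LinearMap.sub_apply, LinearMap.comp_apply, LinearMap.smul_apply,
        LinearEquiv.coe_coe, LinearIsometryEquiv.coe_toLinearEquiv]
      rw [← map_smul, h2]
    rw [h3, ← hC]
    ext x
    simp [unitaryConj]
end
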